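/- arXiv:1412.7169 — 2 statements merged into one kernel-verified Lean document; each statement's English description precedes it below -/
import Mathlib

section
/- Let G be a locally compact Hausdorff group and let z ∈ G^* be right cancellable in G^{luc}. If (n_i) is a norm-bounded net in LUC(G)^* and n_i·z → n·z in the weak-star topology of LUC(G)^*, then n_i → n in the weak-star topology of LUC(G)^*. -/
open scoped BoundedContinuousFunction
open Filter Topology

set_option synthInstance.maxHeartbeats 1000000
set_option maxHeartbeats 1000000

namespace LucPaper

variable {G : Type*} [Group G] [TopologicalSpace G] [IsTopologicalGroup G]

/-- Left translation of a bounded continuous function: `lTrans g f x = f (g * x)`. -/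
noncomputable def lTrans (g : G) (f : G →ᵇ ℂ) : G →ᵇ ℂ :=
  f.compContinuous ⟨fun x => g * x, continuous_const.mul continuous_id⟩

@[simp] lemma lTrans_apply (g : G) (f : G →ᵇ ℂ) (x : G) : lTrans g f x = f (g * x) := rfl

lemma lTrans_mul (g : G) (f h : G →ᵇ ℂ) : lTrans g (f * h) = lTrans g f * lTrans g h := by
  ext x; simp [lTrans]

lemma lTrans_add (g : G) (f h : G →ᵇ ℂ) : lTrans g (f + h) = lTrans g f + lTrans g h := by
  ext x; simp [lTrans]

lemma lTrans_smul (g : G) (c : ℂ) (f : G →ᵇ ℂ) : lTrans g (c • f) = c • lTrans g f := by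
  ext x; simp [lTrans]

lemma lTrans_sub (g : G) (f h : G →ᵇ ℂ) : lTrans g (f - h) = lTrans g f - lTrans g h := by
  ext x; simp [lTrans]

lemma lTrans_lTrans (x g : G) (f : G →ᵇ ℂ) : lTrans x (lTrans g f) = lTrans (g * x) f := by
  ext y; simp [mul_assoc]

lemma norm_lTrans_le (g : G) (f : G →ᵇ ℂ) : ‖lTrans g f‖ ≤ ‖f‖ :=
  f.norm_compContinuous_le _

lemma lTrans_algebraMap (g : G) (c : ℂ) :
    lTrans g (algebraMap ℂ (G →ᵇ ℂ) c) = algebraMap ℂ (G →ᵇ ℂ) c := by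
  ext x; simp [lTrans]

lemma algebraMap_mem_luc (c : ℂ) :
    Continuous fun g : G => lTrans g (algebraMap ℂ (G →ᵇ ℂ) c) := by
  have e : (fun g : G => lTrans g (algebraMap ℂ (G →ᵇ ℂ) c)) =
      fun _ : G => algebraMap ℂ (G →ᵇ ℂ) c :=
    funext fun g => lTrans_algebraMap g c
  rw [e]
  exact continuous_const

/-- The `C*`-algebra `LUC(G)` of bounded left uniformly continuous complex functions on `G`,
realized as a subalgebra of the bounded continuous functions. -/
noncomputable def LUC (G : Type*) [Group G] [TopologicalSpace G] [IsTopologicalGroup G] :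
    Subalgebra ℂ (G →ᵇ ℂ) where
  carrier := {f | Continuous fun g : G => lTrans g f}
  mul_mem' {f h} hf hh := by
    have hf' : Continuous fun g : G => lTrans g f := hf
    have hh' : Continuous fun g : G => lTrans g h := hh
    have e : (fun g : G => lTrans g (f * h)) = fun g => lTrans g f * lTrans g h :=
      funext fun g => lTrans_mul g f h
    show Continuous fun g : G => lTrans g (f * h)
    rw [e]
    exact hf'.mul hh'
  add_mem' {f h} hf hh := by
    have hf' : Continuous fun g : G => lTrans g f := hf
    have hh' : Continuous fun g : G => lTrans g h := hh
    have e : (fun g : G => lTrans g (f + h)) = fun g => lTrans g f + lTrans g h :=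
      funext fun g => lTrans_add g f h
    show Continuous fun g : G => lTrans g (f + h)
    rw [e]
    exact hf'.add hh'
  algebraMap_mem' c := algebraMap_mem_luc c


section Instances
set_option synthInstance.maxHeartbeats 1000000 in
noncomputable instance instLUCNormedAddCommGroup (G : Type*) [Group G] [TopologicalSpace G]
    [IsTopologicalGroup G] : NormedAddCommGroup (LUC G) := inferInstance

set_option synthInstance.maxHeartbeats 1000000 in
noncomputable instance instLUCNormedSpace (G : Type*) [Group G] [TopologicalSpace G]
    [IsTopologicalGroup G] : NormedSpace ℂ (LUC G) := inferInstance

set_option synthInstance.maxHeartbeats 1000000 in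
noncomputable instance instLUCNormedRing (G : Type*) [Group G] [TopologicalSpace G]
    [IsTopologicalGroup G] : NormedRing (LUC G) := inferInstance
end Instances

/-- `LUC(G)^*`, the dual Banach space of `LUC(G)`. -/
noncomputable abbrev Ld (G : Type*) [Group G] [TopologicalSpace G] [IsTopologicalGroup G] :=
  StrongDual ℂ (LUC G)

/-- Left translation as a map `LUC G → LUC G`. -/
noncomputable def lTransL (g : G) (f : LUC G) : LUC G :=
  ⟨lTrans g (f : G →ᵇ ℂ), by
    have hf : Continuous fun h : G => lTrans h (f : G →ᵇ ℂ) := f.2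
    have e : (fun h : G => lTrans h (lTrans g (f : G →ᵇ ℂ))) =
        (fun k : G => lTrans k (f : G →ᵇ ℂ)) ∘ fun h : G => g * h := by
      funext h
      exact lTrans_lTrans h g (f : G →ᵇ ℂ)
    show Continuous fun h : G => lTrans h (lTrans g (f : G →ᵇ ℂ))
    rw [e]
    exact hf.comp (continuous_const.mul continuous_id)⟩

@[simp] lemma lTransL_coe (g : G) (f : LUC G) :
    (lTransL g f : G →ᵇ ℂ) = lTrans g (f : G →ᵇ ℂ) := rfl

lemma continuous_lTransL (f : LUC G) : Continuous fun g : G => lTransL g f :=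
  Continuous.subtype_mk f.2 _

lemma norm_lTransL_le (g : G) (f : LUC G) : ‖lTransL g f‖ ≤ ‖f‖ :=
  norm_lTrans_le g (f : G →ᵇ ℂ)

lemma lTransL_add (g : G) (f h : LUC G) : lTransL g (f + h) = lTransL g f + lTransL g h :=
  Subtype.ext (lTrans_add g _ _)

lemma lTransL_smul (g : G) (c : ℂ) (f : LUC G) : lTransL g (c • f) = c • lTransL g f :=
  Subtype.ext (lTrans_smul g c _)

lemma lTransL_sub (g : G) (f h : LUC G) : lTransL g (f - h) = lTransL g f - lTransL g h :=
  Subtype.ext (lTrans_sub g _ _)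

lemma lTransL_mul (g : G) (f h : LUC G) : lTransL g (f * h) = lTransL g f * lTransL g h :=
  Subtype.ext (lTrans_mul g _ _)

lemma lTransL_lTransL (x g : G) (f : LUC G) : lTransL x (lTransL g f) = lTransL (g * x) f :=
  Subtype.ext (lTrans_lTrans x g _)

end LucPaper

namespace LucPaper
variable {G : Type*} [Group G] [TopologicalSpace G] [IsTopologicalGroup G]

/-- The function `n f : g ↦ ⟨n, l_g f⟩` as a bounded continuous function. -/
noncomputable def arensBCF (n : Ld G) (f : LUC G) : G →ᵇ ℂ :=
  BoundedContinuousFunction.ofNormedAddCommGroup (fun g : G => n (lTransL g f))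
    (n.continuous.comp (continuous_lTransL f)) (‖n‖ * ‖f‖)
    (fun g => le_trans (n.le_opNorm _)
      (mul_le_mul_of_nonneg_left (norm_lTransL_le g f) (norm_nonneg n)))

@[simp] lemma arensBCF_apply (n : Ld G) (f : LUC G) (g : G) :
    arensBCF n f g = n (lTransL g f) := rfl

lemma norm_arensBCF_le (n : Ld G) (f : LUC G) : ‖arensBCF n f‖ ≤ ‖n‖ * ‖f‖ :=
  BoundedContinuousFunction.norm_ofNormedAddCommGroup_le _
    (mul_nonneg (norm_nonneg n) (norm_nonneg f)) _

lemma arensBCF_sub (n : Ld G) (f h : LUC G) :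
    arensBCF n (f - h) = arensBCF n f - arensBCF n h := by
  ext g
  simp [lTransL_sub]

lemma arensBCF_add (n : Ld G) (f h : LUC G) :
    arensBCF n (f + h) = arensBCF n f + arensBCF n h := by
  ext g
  simp [lTransL_add]

lemma arensBCF_smul (n : Ld G) (c : ℂ) (f : LUC G) :
    arensBCF n (c • f) = c • arensBCF n f := by
  ext g
  simp [lTransL_smul]

lemma lipschitz_arensBCF (n : Ld G) :
    LipschitzWith ‖n‖₊ fun f : LUC G => arensBCF n f := by
  apply LipschitzWith.of_dist_le_mul
  intro f h
  rw [dist_eq_norm, dist_eq_norm, ← arensBCF_sub]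
  have : ‖f - h‖ = ‖(f - h : LUC G)‖ := rfl
  calc ‖arensBCF n (f - h)‖ ≤ ‖n‖ * ‖f - h‖ := norm_arensBCF_le n (f - h)
    _ = ‖n‖₊ * ‖f - h‖ := rfl

lemma lTrans_arensBCF (n : Ld G) (f : LUC G) (g : G) :
    lTrans g (arensBCF n f) = arensBCF n (lTransL g f) := by
  ext x
  simp only [lTrans_apply, arensBCF_apply]
  rw [lTransL_lTransL]

/-- The element `n f` of `LUC(G)`. -/
noncomputable def arensFn (n : Ld G) (f : LUC G) : LUC G :=
  ⟨arensBCF n f, by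
    have e : (fun g : G => lTrans g (arensBCF n f)) =
        (fun h : LUC G => arensBCF n h) ∘ fun g : G => lTransL g f :=
      funext fun g => lTrans_arensBCF n f g
    show Continuous fun g : G => lTrans g (arensBCF n f)
    rw [e]
    exact (lipschitz_arensBCF n).continuous.comp (continuous_lTransL f)⟩

@[simp] lemma arensFn_coe (n : Ld G) (f : LUC G) : (arensFn n f : G →ᵇ ℂ) = arensBCF n f := rfl

lemma norm_arensFn_le (n : Ld G) (f : LUC G) : ‖arensFn n f‖ ≤ ‖n‖ * ‖f‖ :=
  norm_arensBCF_le n f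

/-- The Arens-type product on `LUC(G)^*`: `⟨m · n, f⟩ = ⟨m, n f⟩`. -/
noncomputable def arens (m n : Ld G) : Ld G :=
  LinearMap.mkContinuous
    { toFun := fun f : LUC G => m (arensFn n f)
      map_add' := fun f h => by
        show m (arensFn n (f + h)) = m (arensFn n f) + m (arensFn n h)
        rw [show arensFn n (f + h) = arensFn n f + arensFn n h from
          Subtype.ext (arensBCF_add n f h), map_add]
      map_smul' := fun c f => by
        show m (arensFn n (c • f)) = c • m (arensFn n f)
        rw [show arensFn n (c • f) = c • arensFn n f from
          Subtype.ext (arensBCF_smul n c f), map_smul] }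
    (‖m‖ * ‖n‖)
    (fun f => by
      calc ‖m (arensFn n f)‖ ≤ ‖m‖ * ‖arensFn n f‖ := m.le_opNorm _
        _ ≤ ‖m‖ * (‖n‖ * ‖f‖) :=
            mul_le_mul_of_nonneg_left (norm_arensFn_le n f) (norm_nonneg m)
        _ = ‖m‖ * ‖n‖ * ‖f‖ := by ring)

@[simp] lemma arens_apply (m n : Ld G) (f : LUC G) : arens m n f = m (arensFn n f) := rfl

end LucPaper
namespace LucPaper
variable {G : Type*} [Group G] [TopologicalSpace G] [IsTopologicalGroup G]

/-- Evaluation at a point of `G`, as an element of `LUC(G)^*`. -/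
noncomputable def evalChar (g : G) : Ld G :=
  LinearMap.mkContinuous
    { toFun := fun f : LUC G => (f : G →ᵇ ℂ) g
      map_add' := fun f h => rfl
      map_smul' := fun c f => rfl }
    1 (fun f => by rw [one_mul]; exact (f : G →ᵇ ℂ).norm_coe_le_norm g)

@[simp] lemma evalChar_apply (g : G) (f : LUC G) : evalChar g f = (f : G →ᵇ ℂ) g := rfl

variable (G) in
/-- The `LUC`-compactification `G^{luc}` realized as the set of nonzero multiplicative
functionals in `LUC(G)^*`. -/
def gLuc : Set (Ld G) :=
  {m | m ≠ 0 ∧ ∀ f h : LUC G, m (f * h) = m f * m h}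

variable (G) in
/-- The corona `G^* = G^{luc} \ G` in `LUC(G)^*`. -/
def gStar : Set (Ld G) :=
  gLuc G \ Set.range (evalChar (G := G))

lemma evalChar_mem_gLuc (g : G) : evalChar g ∈ gLuc G := by
  constructor
  · intro h0
    have h1 : evalChar g (1 : LUC G) = 0 := by rw [h0]; rfl
    have h2 : evalChar g (1 : LUC G) = 1 := rfl
    rw [h2] at h1
    exact one_ne_zero h1
  · intro f h
    have : ((f * h : LUC G) : G →ᵇ ℂ) = (f : G →ᵇ ℂ) * (h : G →ᵇ ℂ) := rfl
    simp [this]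

end LucPaper
namespace LucPaper
variable {G : Type*} [Group G] [TopologicalSpace G] [IsTopologicalGroup G]

/-- Membership in `C_0(G)`: vanishing at infinity. -/
def IsC0 (f : G →ᵇ ℂ) : Prop := Tendsto (f : G → ℂ) (cocompact G) (𝓝 0)

variable (G) in
/-- The annihilator `C_0(G)^⊥` of `C_0(G)` in `LUC(G)^*`. -/
noncomputable def C0perp : Submodule ℂ (Ld G) where
  carrier := {m | ∀ f : LUC G, IsC0 (f : G →ᵇ ℂ) → m f = 0}
  add_mem' {m n} hm hn := fun f hf => by
    simp [hm f hf, hn f hf]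
  zero_mem' := fun f _ => rfl
  smul_mem' c m hm := fun f hf => by
    simp [hm f hf]

lemma isC0_lTrans {f : G →ᵇ ℂ} (hf : IsC0 f) (g : G) : IsC0 (lTrans g f) := by
  have h1 : Tendsto (⇑(Homeomorph.mulLeft g)) (cocompact G) (cocompact G) :=
    tendsto_map.mono_right (le_of_eq ((Homeomorph.mulLeft g).map_cocompact))
  have h1' : Tendsto (fun x : G => g * x) (cocompact G) (cocompact G) := h1
  exact hf.comp h1'

lemma isC0_rTransBCF {f : G →ᵇ ℂ} (hf : IsC0 f) (x : G) :
    IsC0 (f.compContinuous ⟨fun g : G => g * x, continuous_id.mul continuous_const⟩) := by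
  have h1 : Tendsto (⇑(Homeomorph.mulRight x)) (cocompact G) (cocompact G) :=
    tendsto_map.mono_right (le_of_eq ((Homeomorph.mulRight x).map_cocompact))
  have h1' : Tendsto (fun g : G => g * x) (cocompact G) (cocompact G) := h1
  exact hf.comp h1'

/-- `C_0(G)^⊥` is a left ideal for the Arens product: if `n ∈ C_0(G)^⊥` then `m · n ∈ C_0(G)^⊥`
for every `m`. -/
lemma arens_mem_C0perp_left (m : Ld G) {n : Ld G} (hn : n ∈ C0perp G) :
    arens m n ∈ C0perp G := by
  intro f hf
  have hz : arensFn n f = 0 := by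
    apply Subtype.ext
    ext g
    exact hn (lTransL g f) (isC0_lTrans hf g)
  rw [arens_apply, hz, map_zero]

/-- Multiplying an element of `C_0(G)^⊥` by a point evaluation on the right stays in
`C_0(G)^⊥`. -/
lemma arens_evalChar_mem_C0perp {m : Ld G} (hm : m ∈ C0perp G) (x : G) :
    arens m (evalChar x) ∈ C0perp G := by
  intro f hf
  rw [arens_apply]
  apply hm
  show IsC0 (arensBCF (evalChar x) f)
  have e : (arensBCF (evalChar x) f : G → ℂ) =
      ((f : G →ᵇ ℂ).compContinuous ⟨fun g : G => g * x, continuous_id.mul continuous_const⟩ :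
        G → ℂ) := by
    funext g
    rfl
  show Tendsto (arensBCF (evalChar x) f : G → ℂ) (cocompact G) (𝓝 0)
  rw [e]
  exact isC0_rTransBCF hf x

/-- The multiplication on `C_0(G)^⊥` induced by the Arens product. -/
noncomputable instance : Mul (C0perp G) :=
  ⟨fun m n => ⟨arens m.1 n.1, arens_mem_C0perp_left m.1 n.2⟩⟩

@[simp] lemma C0perp_mul_coe (m n : C0perp G) : ((m * n : C0perp G) : Ld G) = arens m.1 n.1 := rfl

end LucPaper
namespace LucPaper
variable {G : Type*} [Group G] [TopologicalSpace G] [IsTopologicalGroup G]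

section WeakStar

variable {H : Type*} [Group H] [TopologicalSpace H] [IsTopologicalGroup H]

/-- Weak-star continuity for a map `C_0(G)^⊥ → C_0(H)^⊥`, phrased via filters:
whenever a filter converges pointwise (weak-star) to `m`, the images converge pointwise
(weak-star) to the image of `m`. -/
def WStarContinuousC0 (T : C0perp G → C0perp H) : Prop :=
  ∀ (l : Filter (C0perp G)) (m : C0perp G),
    (∀ f : LUC G, Tendsto (fun n : C0perp G => (n : Ld G) f) l (𝓝 ((m : Ld G) f))) →
    ∀ f : LUC H, Tendsto (fun n : C0perp G => (T n : Ld H) f) l (𝓝 ((T m : Ld H) f))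

/-- Weak-star continuity for a map `LUC(G)^* → LUC(H)^*`, phrased via filters. -/
def WStarContinuousD (T : Ld G → Ld H) : Prop :=
  ∀ (l : Filter (Ld G)) (m : Ld G),
    (∀ f : LUC G, Tendsto (fun n : Ld G => n f) l (𝓝 (m f))) →
    ∀ f : LUC H, Tendsto (fun n : Ld G => T n f) l (𝓝 (T m f))

end WeakStar

section WeakDualSide

/-- `LUC(G)^*` equipped with its weak-star topology. -/
noncomputable abbrev LdW (G : Type*) [Group G] [TopologicalSpace G] [IsTopologicalGroup G] :=
  WeakDual ℂ (LUC G)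

variable (G) in
/-- The `LUC`-compactification `G^{luc}` as a subset of the weak-star dual. -/
def gLucW : Set (LdW G) :=
  {m | m ≠ 0 ∧ ∀ f h : LUC G, m (f * h) = m f * m h}

/-- Evaluation at a point of `G` as an element of the weak-star dual. -/
noncomputable def evalCharW (g : G) : LdW G :=
  StrongDual.toWeakDual (evalChar g)

variable (G) in
/-- The corona `G^* = G^{luc} \ G` inside the weak-star dual. -/
def gStarW : Set (LdW G) :=
  gLucW G \ Set.range (evalCharW (G := G))

/-- The Arens product transported to the weak-star dual. -/
noncomputable def arensW (m n : LdW G) : LdW G :=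
  StrongDual.toWeakDual
    (arens (WeakDual.toStrongDual m) (WeakDual.toStrongDual n))

lemma evalCharW_mem_gLucW (g : G) : evalCharW g ∈ gLucW G := by
  have h := evalChar_mem_gLuc (g := g)
  constructor
  · intro h0
    apply h.1
    have : WeakDual.toStrongDual (evalCharW g) = WeakDual.toStrongDual (0 : LdW G) := by
      rw [h0]
    simpa [evalCharW] using this
  · intro f k
    exact h.2 f k

end WeakDualSide

section FSpace

/-- `X` is an F-space: every bounded continuous real function `f` factors as `f = k·|f|`
with `k` bounded continuous. -/
def IsFSpace (X : Type*) [TopologicalSpace X] : Prop :=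
  ∀ f : X →ᵇ ℝ, ∃ k : X →ᵇ ℝ, ∀ x : X, f x = k x * |f x|

/-- A P-point: every `G_δ` set containing the point is a neighbourhood of the point. -/
def IsPPoint {X : Type*} [TopologicalSpace X] (p : X) : Prop :=
  ∀ s : Set X, p ∈ s → (∃ U : ℕ → Set X, (∀ n, IsOpen (U n)) ∧ s = ⋂ n, U n) → s ∈ 𝓝 p

end FSpace

end LucPaper

/-!
The characters of `LUC(G)` are the points of `G^{luc}`, and for `z ∈ G^{luc}` the dual of
`f ↦ z f` is `φ ↦ φ · z`. If `z` is right cancellable, this is a continuous injection of the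
compact character space into itself, hence a closed embedding; by Tietze extension and Gelfand duality
`f ↦ z f` is then onto `LUC(G)`. Writing `f = z f'` gives
`⟨n_i, f⟩ = ⟨n_i · z, f'⟩ → ⟨n · z, f'⟩ = ⟨n, f⟩`.
-/

open WeakDual WeakDual.CharacterSpace in
theorem AlgHom.surjective_of_injective_comp_characterSpace
    {A B : Type*} [CommCStarAlgebra A] [CommCStarAlgebra B] (ψ : A →ₐ[ℂ] B)
    (hψ : Function.Injective fun φ : characterSpace ℂ B => (equivAlgHom φ).comp ψ) :
    Function.Surjective ψ := by
  let ρ : C(characterSpace ℂ B, characterSpace ℂ A) :=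
    { toFun := fun φ => equivAlgHom.symm ((equivAlgHom φ).comp ψ)
      continuous_toFun := Continuous.subtype_mk (continuous_of_continuous_eval fun a =>
        map_continuous (gelfandTransform ℂ B (ψ a))) _ }
  have hρ : Topology.IsClosedEmbedding ρ :=
    ρ.continuous.isClosedEmbedding (equivAlgHom.symm.injective.comp hψ)
  intro b
  -- Tietze: extend the Gelfand transform of `b` along the closed embedding `ρ`.
  obtain ⟨K, hK⟩ := (gelfandTransform ℂ B b).exists_extension hρ
  obtain ⟨a, rfl⟩ := (gelfandTransform_bijective A).2 K
  refine ⟨a, (gelfandTransform_bijective B).1 (ContinuousMap.ext fun φ => ?_)⟩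
  exact congrArg (· φ) hK

namespace LucPaper

variable {G : Type*} [Group G] [TopologicalSpace G] [IsTopologicalGroup G]

lemma isClosed_LUC : IsClosed (LUC G : Set (G →ᵇ ℂ)) := by
  refine IsSeqClosed.isClosed fun fs f hfs hlim => ?_
  have hu : TendstoUniformly (fun k (g : G) => lTrans g (fs k)) (fun g => lTrans g f) atTop := by
    rw [Metric.tendstoUniformly_iff]
    intro ε hε
    filter_upwards [Metric.tendsto_nhds.mp hlim ε hε] with k hk g
    calc dist (lTrans g f) (lTrans g (fs k)) = ‖lTrans g (f - fs k)‖ := by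
          rw [dist_eq_norm, lTrans_sub]
      _ ≤ ‖f - fs k‖ := norm_lTrans_le _ _
      _ < ε := by rwa [← dist_eq_norm']
  exact hu.continuous (Eventually.of_forall hfs).frequently

lemma star_mem_LUC {f : G →ᵇ ℂ} (hf : f ∈ LUC G) : star f ∈ LUC G :=
  (continuous_star.comp hf : Continuous fun g : G => star (lTrans g f))

noncomputable instance : StarRing (LUC G) where
  star f := ⟨star (f : G →ᵇ ℂ), star_mem_LUC f.2⟩
  star_involutive f := Subtype.ext (star_star (f : G →ᵇ ℂ))
  star_mul f h := Subtype.ext (star_mul (f : G →ᵇ ℂ) h)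
  star_add f h := Subtype.ext (star_add (f : G →ᵇ ℂ) h)

instance : StarModule ℂ (LUC G) :=
  ⟨fun c f => Subtype.ext (star_smul c (f : G →ᵇ ℂ))⟩

instance : CStarRing (LUC G) where
  norm_mul_self_le f := (CStarRing.norm_star_mul_self (x := (f : G →ᵇ ℂ))).symm.le

instance : CompleteSpace (LUC G) := isClosed_LUC.completeSpace_coe

noncomputable instance : CommCStarAlgebra (LUC G) where

lemma mem_gLuc_iff {m : Ld G} :
    m ∈ gLuc G ↔ StrongDual.toWeakDual m ∈ WeakDual.characterSpace ℂ (LUC G) :=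
  Iff.rfl

lemma arensFn_one {z : Ld G} (hz : z ∈ gLuc G) : arensFn z 1 = 1 :=
  Subtype.ext <| BoundedContinuousFunction.ext fun _ =>
    map_one (⟨_, mem_gLuc_iff.mp hz⟩ : WeakDual.characterSpace ℂ (LUC G))

lemma arensFn_mul {z : Ld G} (hz : z ∈ gLuc G) (f h : LUC G) :
    arensFn z (f * h) = arensFn z f * arensFn z h :=
  Subtype.ext <| BoundedContinuousFunction.ext fun g => by
    simp only [arensFn_coe, arensBCF_apply, lTransL_mul, hz.2]
    rfl

noncomputable def arensFnAlgHom {z : Ld G} (hz : z ∈ gLuc G) : LUC G →ₐ[ℂ] LUC G :=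
  AlgHom.ofLinearMap
    { toFun := arensFn z
      map_add' := fun f h => Subtype.ext (arensBCF_add z f h)
      map_smul' := fun c f => Subtype.ext (arensBCF_smul z c f) }
    (arensFn_one hz) (arensFn_mul hz)

def IsRightCancellable (z : Ld G) : Prop :=
  ∀ m n : Ld G, m ∈ gLuc G → n ∈ gLuc G → arens m z = arens n z → m = n

open WeakDual WeakDual.CharacterSpace in
lemma injective_comp_arensFnAlgHom {z : Ld G} (hz : z ∈ gLuc G) (hrc : IsRightCancellable z) :
    Function.Injective fun φ : characterSpace ℂ (LUC G) =>
      (equivAlgHom φ).comp (arensFnAlgHom hz) := by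
  intro φ ψ h
  have hφψ : arens (toStrongDual φ) z = arens (toStrongDual ψ) z :=
    ContinuousLinearMap.ext fun f => DFunLike.congr_fun h f
  exact Subtype.ext <| toStrongDual.injective <|
    hrc _ _ (mem_gLuc_iff.mpr φ.2) (mem_gLuc_iff.mpr ψ.2) hφψ

lemma arensFn_surjective {z : Ld G} (hz : z ∈ gLuc G) (hrc : IsRightCancellable z) :
    Function.Surjective (arensFn z) :=
  (arensFnAlgHom hz).surjective_of_injective_comp_characterSpace
    (injective_comp_arensFnAlgHom hz hrc)

end LucPaper

open LucPaper Filter Topology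
open scoped BoundedContinuousFunction

theorem wstar_tendsto_of_arens_right_cancellable_general
    {G : Type*} [Group G] [TopologicalSpace G] [IsTopologicalGroup G]
    (z : Ld G) (hz : z ∈ gStar G)
    (hrc : ∀ m n : Ld G, m ∈ gLuc G → n ∈ gLuc G → arens m z = arens n z → m = n)
    {ι : Type*} (l : Filter ι) (ns : ι → Ld G) (n : Ld G)
    (hconv : ∀ f : LUC G, Tendsto (fun i => arens (ns i) z f) l (𝓝 (arens n z f))) :
    ∀ f : LUC G, Tendsto (fun i => ns i f) l (𝓝 (n f)) := by
  intro f
  obtain ⟨f, rfl⟩ := arensFn_surjective hz.1 hrc f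
  exact hconv f

/-- If `z ∈ G^*` is right cancellable in `G^{luc}` and `(n_i)` is a norm-bounded
net in `LUC(G)^*` with `n_i · z → n · z` weak-star, then `n_i → n` weak-star. -/
theorem wstar_tendsto_of_arens_right_cancellable
    {G : Type*} [Group G] [TopologicalSpace G] [IsTopologicalGroup G]
    [T2Space G] [LocallyCompactSpace G]
    (z : Ld G) (hz : z ∈ gStar G)
    (hrc : ∀ m n : Ld G, m ∈ gLuc G → n ∈ gLuc G → arens m z = arens n z → m = n)
    {ι : Type*} (l : Filter ι) (ns : ι → Ld G) (n : Ld G)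
    (C : ℝ) (hb : ∀ i, ‖ns i‖ ≤ C)
    (hconv : ∀ f : LUC G, Tendsto (fun i => arens (ns i) z f) l (𝓝 (arens n z f))) :
    ∀ f : LUC G, Tendsto (fun i => ns i f) l (𝓝 (n f)) :=
  wstar_tendsto_of_arens_right_cancellable_general z hz hrc l ns n hconv
end

section
/- Let G and H be locally compact Hausdorff groups. If φ : G^{luc} → H^{luc} is a surjective semigroup homomorphism, then φ(e_G) = e_H and φ(x) ∈ H for every x ∈ G, i.e., φ(G) ⊆ H. -/
open scoped BoundedContinuousFunction
open Filter Topology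

set_option synthInstance.maxHeartbeats 1000000
set_option maxHeartbeats 1000000

/-! Pulling `e_H` back along the surjection `φ` gives `p` with `e_H · φ(e_G) = φ(p e_G) = e_H`,
so `φ(e_G) = e_H`. For `x ∈ G` we get `φ(x⁻¹) φ(x) = e_H`; since `C_0(H)^⊥` is a left ideal
which does not contain `e_H`, the character `φ(x)` is nonzero on some `f₀ ∈ C_0(H)`. Such a
character is a point evaluation: otherwise the kernels of the point evaluations on the compact
set `{|f₀| ≥ |u f₀| / 2}` are not all above `ker u`, and finitely many `|f_i|²` with `u f_i = 0`,
together with `|f₀ - u f₀|²`, add up to an element of `ker u` bounded below by a positive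
constant, which a character (of norm `≤ 1`) cannot annihilate. -/

lemma IsCompact.exists_pos_forall_le {X : Type*} [TopologicalSpace X] {K : Set X}
    (hK : IsCompact K) {r : X → ℝ} (hr : Continuous r) (hpos : ∀ x ∈ K, 0 < r x) {b : ℝ}
    (hb : 0 < b) (hout : ∀ x ∉ K, b ≤ r x) : ∃ c, 0 < c ∧ ∀ x, c ≤ r x := by
  obtain ⟨c, hc, hcK⟩ := hK.exists_forall_le' hr.continuousOn hpos
  refine ⟨min c b, lt_min hc hb, fun x => ?_⟩
  by_cases hx : x ∈ K
  · exact (min_le_left _ _).trans (hcK x hx)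
  · exact (min_le_right _ _).trans (hout x hx)

namespace LucPaper

lemma IsC0.isCompact_setOf_le_norm {X : Type*} [TopologicalSpace X] {f : X →ᵇ ℂ} (hf : IsC0 f)
    {ε : ℝ} (hε : 0 < ε) : IsCompact {x | ε ≤ ‖f x‖} := by
  obtain ⟨C, hC, hsub⟩ := mem_cocompact.mp (hf (Metric.ball_mem_nhds 0 hε))
  refine hC.of_isClosed_subset (isClosed_le continuous_const f.continuous.norm) fun x hx => ?_
  by_contra hxC
  exact (not_le.2 (by simpa using hsub hxC)) hx

variable {G : Type*} [Group G] [TopologicalSpace G] [IsTopologicalGroup G]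

lemma lTransL_one (f : LUC G) : lTransL (1 : G) f = f := by
  ext x
  simp

lemma arens_evalChar_one_left (m : Ld G) : arens (evalChar (1 : G)) m = m := by
  ext f
  simp [lTransL_one]

lemma arensFn_evalChar_one (f : LUC G) : arensFn (evalChar (1 : G)) f = f := by
  ext x
  simp

lemma arens_evalChar_one_right (m : Ld G) : arens m (evalChar (1 : G)) = m := by
  ext f
  simp [arensFn_evalChar_one]

lemma arens_evalChar_evalChar (a b : G) :
    arens (evalChar a) (evalChar b) = evalChar (a * b) :=
  rfl

lemma map_one_of_mem_gLuc {u : Ld G} (hu : u ∈ gLuc G) : u 1 = 1 := by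
  have hsq : u 1 * u 1 = u 1 := by rw [← hu.2, one_mul]
  have hne : u 1 ≠ 0 := fun h0 => hu.1 <| ContinuousLinearMap.ext fun f => by
    rw [← mul_one f, hu.2, h0, mul_zero, zero_apply]
  exact mul_left_cancel₀ hne (hsq.trans (mul_one _).symm)

lemma map_pow_of_mem_gLuc {u : Ld G} (hu : u ∈ gLuc G) (f : LUC G) (n : ℕ) :
    u (f ^ n) = u f ^ n := by
  induction n with
  | zero => rw [pow_zero, pow_zero, map_one_of_mem_gLuc hu]
  | succ n ih => rw [pow_succ, hu.2, ih, pow_succ]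

lemma norm_apply_le_of_mem_gLuc {u : Ld G} (hu : u ∈ gLuc G) (f : LUC G) : ‖u f‖ ≤ ‖f‖ := by
  by_contra! hlt
  have hpos : 0 < ‖u f‖ := (norm_nonneg f).trans_lt hlt
  have hsmall : Tendsto (fun n : ℕ => ‖u‖ * (‖f‖ / ‖u f‖) ^ n) atTop (𝓝 0) := by
    simpa only [mul_zero] using (tendsto_pow_atTop_nhds_zero_of_lt_one (by positivity)
      ((div_lt_one hpos).2 hlt)).const_mul ‖u‖
  obtain ⟨n, hn⟩ :=
    ((hsmall.comp (tendsto_add_atTop_nat 1)).eventually (gt_mem_nhds zero_lt_one)).exists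
  have hbound : ‖u f‖ ^ (n + 1) ≤ ‖u‖ * ‖f‖ ^ (n + 1) := by
    rw [← norm_pow, ← map_pow_of_mem_gLuc hu]
    exact (u.le_opNorm _).trans
      (mul_le_mul_of_nonneg_left (norm_pow_le' f n.succ_pos) (norm_nonneg u))
  rw [Function.comp_apply, div_pow, ← mul_div_assoc, div_lt_one (pow_pos hpos _)] at hn
  exact hbound.not_gt hn

/-- Otherwise `1 - h / ‖h‖` would have norm `< 1` and value `1` under `u`. -/
lemma apply_ne_zero_of_forall_le {u : Ld G} (hu : u ∈ gLuc G) {h : LUC G} {r : G → ℝ}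
    (hr : ∀ x, (h : G →ᵇ ℂ) x = r x) {c : ℝ} (hc : 0 < c) (hcr : ∀ x, c ≤ r x) : u h ≠ 0 := by
  intro hzero
  set M := ‖h‖
  have hrM : ∀ x, r x ≤ M := fun x => by
    have := (h : G →ᵇ ℂ).norm_coe_le_norm x
    rwa [hr, Complex.norm_real, Real.norm_of_nonneg (hc.le.trans (hcr x))] at this
  have hcM : c ≤ M := (hcr 1).trans (hrM 1)
  have hM : 0 < M := hc.trans_le hcM
  set a : LUC G := 1 - ((M⁻¹ : ℝ) : ℂ) • h
  have ha : u a = 1 := by simp [a, hzero, map_one_of_mem_gLuc hu]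
  have hnorm : ‖a‖ ≤ 1 - c / M := by
    refine (BoundedContinuousFunction.norm_le (f := (a : G →ᵇ ℂ))
      (sub_nonneg.2 ((div_le_one hM).2 hcM))).2 fun x => ?_
    have hax : (a : G →ᵇ ℂ) x = ((1 - r x / M : ℝ) : ℂ) := by
      simp [a, hr, div_eq_inv_mul]
    rw [hax, Complex.norm_real, Real.norm_of_nonneg (sub_nonneg.2 ((div_le_one hM).2 (hrM x)))]
    gcongr
    exact hcr x
  have := (norm_apply_le_of_mem_gLuc hu a).trans hnorm
  rw [ha, norm_one] at this
  linarith [div_pos hc hM]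

noncomputable def normSqLUC (f : LUC G) : LUC G :=
  f * ⟨star (f : G →ᵇ ℂ), star_mem_LUC f.2⟩

lemma normSqLUC_apply (f : LUC G) (x : G) :
    (normSqLUC f : G →ᵇ ℂ) x = Complex.normSq ((f : G →ᵇ ℂ) x) :=
  Complex.mul_conj _

lemma apply_normSqLUC_eq_zero {u : Ld G} (hu : u ∈ gLuc G) {f : LUC G} (hf : u f = 0) :
    u (normSqLUC f) = 0 := by
  rw [normSqLUC, hu.2, hf, zero_mul]

lemma exists_ker_le_ker_evalChar {u : Ld G} (hu : u ∈ gLuc G) {f₀ : LUC G}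
    (hf₀ : IsC0 (f₀ : G →ᵇ ℂ)) (hne : u f₀ ≠ 0) :
    ∃ y : G, ∀ f : LUC G, u f = 0 → evalChar y f = 0 := by
  by_contra! hcon
  choose ff hffu hffy using hcon
  set ε := ‖u f₀‖ / 2 with hε_def
  have hε : 0 < ε := half_pos (norm_pos_iff.2 hne)
  set K := {x | ε ≤ ‖(f₀ : G →ᵇ ℂ) x‖}
  have hK : IsCompact K := hf₀.isCompact_setOf_le_norm hε
  obtain ⟨t, -, hKt⟩ := hK.elim_nhds_subcover (fun y => {x | (ff y : G →ᵇ ℂ) x ≠ 0})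
    fun y _ => (isOpen_ne_fun (ff y : G →ᵇ ℂ).continuous continuous_const).mem_nhds (hffy y)
  set g : LUC G := f₀ - u f₀ • 1
  have hg : u g = 0 := by simp [g, map_one_of_mem_gLuc hu]
  set h : LUC G := normSqLUC g + ∑ y ∈ t, normSqLUC (ff y)
  set r : G → ℝ := fun x =>
    Complex.normSq ((g : G →ᵇ ℂ) x) + ∑ y ∈ t, Complex.normSq ((ff y : G →ᵇ ℂ) x)
  have hhr : ∀ x, (h : G →ᵇ ℂ) x = r x := fun x => by simp [h, r, normSqLUC_apply]
  have huh : u h = 0 := by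
    simp [h, apply_normSqLUC_eq_zero hu hg, apply_normSqLUC_eq_zero hu (hffu _)]
  have hr : Continuous r := by fun_prop
  have hrK : ∀ x ∈ K, 0 < r x := fun x hx => by
    obtain ⟨y, hy, hxy⟩ := Set.mem_iUnion₂.1 (hKt hx)
    exact add_pos_of_nonneg_of_pos (Complex.normSq_nonneg _) (Finset.sum_pos'
      (fun _ _ => Complex.normSq_nonneg _) ⟨y, hy, Complex.normSq_pos.2 hxy⟩)
  have hr_out : ∀ x ∉ K, ε ^ 2 ≤ r x := fun x hx => by
    have hfx : ‖(f₀ : G →ᵇ ℂ) x‖ < ε := not_le.1 hx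
    have hgx : ε ≤ ‖(g : G →ᵇ ℂ) x‖ := by
      have : (g : G →ᵇ ℂ) x = (f₀ : G →ᵇ ℂ) x - u f₀ := by simp [g]
      rw [this, norm_sub_rev]
      linarith [norm_sub_norm_le (u f₀) ((f₀ : G →ᵇ ℂ) x)]
    calc ε ^ 2 ≤ Complex.normSq ((g : G →ᵇ ℂ) x) := by
          rw [Complex.normSq_eq_norm_sq]; gcongr
      _ ≤ r x := le_add_of_nonneg_right (Finset.sum_nonneg fun _ _ => Complex.normSq_nonneg _)
  obtain ⟨c, hc, hcr⟩ := hK.exists_pos_forall_le hr hrK (pow_pos hε 2) hr_out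
  exact apply_ne_zero_of_forall_le hu hhr hc hcr huh

lemma eq_evalChar_of_ker_le {u : Ld G} (hu : u ∈ gLuc G) {y : G}
    (hy : ∀ f : LUC G, u f = 0 → evalChar y f = 0) : u = evalChar y := by
  ext f
  have := hy (f - u f • 1) (by simp [map_one_of_mem_gLuc hu])
  rw [evalChar_apply, eq_comm, ← sub_eq_zero]
  simpa using this

lemma exists_eq_evalChar_of_notMem_C0perp {u : Ld G} (hu : u ∈ gLuc G) (hu0 : u ∉ C0perp G) :
    ∃ y : G, u = evalChar y := by
  obtain ⟨f, hf⟩ := not_forall.1 hu0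
  obtain ⟨hf, hne⟩ := Classical.not_imp.1 hf
  obtain ⟨y, hy⟩ := exists_ker_le_ker_evalChar hu hf hne
  exact ⟨y, eq_evalChar_of_ker_le hu hy⟩

/-- Continuity of `g ↦ l_g f` is uniform continuity of `f` for the right uniformity, in which
`a` and `b` are close when `b a⁻¹` is near `1`. -/
lemma mem_LUC_of_isC0 {f : G →ᵇ ℂ} (hf : IsC0 f) : f ∈ LUC G := by
  let := IsTopologicalGroup.rightUniformSpace G
  have huc : UniformContinuous f := f.continuous.uniformContinuous_of_tendsto_cocompact hf
  show Continuous fun g : G => lTrans g f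
  refine continuous_iff_continuousAt.2 fun g₀ => Metric.tendsto_nhds.2 fun ε hε => ?_
  obtain ⟨V, hV, hVf⟩ := mem_comap.1 (huc (Metric.dist_mem_uniformity (half_pos hε)))
  have hg : Tendsto (fun g => g * g₀⁻¹) (𝓝 g₀) (𝓝 1) := by
    simpa using (continuous_mul_const g₀⁻¹).tendsto g₀
  filter_upwards [hg hV] with g hg
  refine ((BoundedContinuousFunction.dist_le (half_pos hε).le).2 fun x => ?_).trans_lt
    (half_lt_self hε)
  rw [dist_comm]
  have hx : (g * x) * (g₀ * x)⁻¹ ∈ V := by simpa [mul_assoc] using hg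
  exact (@hVf (g₀ * x, g * x) hx).le

variable (G) in
lemma exists_isC0_apply_one_eq_one [LocallyCompactSpace G] :
    ∃ f : LUC G, IsC0 (f : G →ᵇ ℂ) ∧ (f : G →ᵇ ℂ) 1 = 1 := by
  obtain ⟨f, hf1, -, hfc, hf01⟩ := exists_continuous_one_zero_of_isCompact (X := G)
    isCompact_singleton isClosed_empty (Set.disjoint_empty {1})
  let F : G →ᵇ ℂ := BoundedContinuousFunction.ofNormedAddCommGroup (fun x => (f x : ℂ))
    (by fun_prop) 1 fun x => by simpa [abs_of_nonneg (hf01 x).1] using (hf01 x).2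
  have hF : IsC0 F := (hfc.comp_left Complex.ofReal_zero).is_zero_at_infty
  exact ⟨⟨F, mem_LUC_of_isC0 hF⟩, hF, by simp [F, hf1 rfl]⟩

lemma evalChar_one_notMem_C0perp [LocallyCompactSpace G] : evalChar (1 : G) ∉ C0perp G := by
  obtain ⟨f, hf, hf1⟩ := exists_isC0_apply_one_eq_one G
  intro h
  simpa [hf1] using h f hf

end LucPaper

open LucPaper Filter Topology
open scoped BoundedContinuousFunction

theorem surjective_hom_maps_G_into_H_general
    {G : Type*} [Group G] [TopologicalSpace G] [IsTopologicalGroup G]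
    {H : Type*} [Group H] [TopologicalSpace H] [IsTopologicalGroup H]
    [LocallyCompactSpace H]
    (φ : gLuc G → gLuc H)
    (hhom : ∀ p q r : gLuc G, arens p.1 q.1 = r.1 → arens (φ p).1 (φ q).1 = (φ r).1)
    (hsurj : Function.Surjective φ) :
    (φ ⟨evalChar (1 : G), evalChar_mem_gLuc 1⟩).1 = evalChar (1 : H) ∧
      ∀ x : G, ∃ y : H, (φ ⟨evalChar x, evalChar_mem_gLuc x⟩).1 = evalChar y := by
  have hone : (φ ⟨evalChar 1, evalChar_mem_gLuc 1⟩).1 = evalChar (1 : H) := by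
    obtain ⟨p, hp⟩ := hsurj ⟨evalChar 1, evalChar_mem_gLuc 1⟩
    have := hhom p ⟨evalChar 1, evalChar_mem_gLuc 1⟩ p (arens_evalChar_one_right p.1)
    rwa [hp, arens_evalChar_one_left] at this
  refine ⟨hone, fun x => exists_eq_evalChar_of_notMem_C0perp (φ _).2 fun hx => ?_⟩
  have hinv := hhom ⟨evalChar x⁻¹, evalChar_mem_gLuc _⟩ ⟨evalChar x, evalChar_mem_gLuc x⟩
    ⟨evalChar 1, evalChar_mem_gLuc 1⟩ (by rw [arens_evalChar_evalChar, inv_mul_cancel])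
  rw [hone] at hinv
  exact evalChar_one_notMem_C0perp (hinv ▸ arens_mem_C0perp_left _ hx)

/-- A surjective semigroup homomorphism `φ : G^{luc} → H^{luc}` satisfies
`φ(e_G) = e_H` and maps `G` into `H`. -/
theorem surjective_hom_maps_G_into_H
    {G : Type*} [Group G] [TopologicalSpace G] [IsTopologicalGroup G]
    [T2Space G] [LocallyCompactSpace G]
    {H : Type*} [Group H] [TopologicalSpace H] [IsTopologicalGroup H]
    [T2Space H] [LocallyCompactSpace H]
    (φ : gLuc G → gLuc H)
    (hhom : ∀ p q r : gLuc G, arens p.1 q.1 = r.1 → arens (φ p).1 (φ q).1 = (φ r).1)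
    (hsurj : Function.Surjective φ) :
    (φ ⟨evalChar (1 : G), evalChar_mem_gLuc 1⟩).1 = evalChar (1 : H) ∧
      ∀ x : G, ∃ y : H, (φ ⟨evalChar x, evalChar_mem_gLuc x⟩).1 = evalChar y :=
  surjective_hom_maps_G_into_H_general φ hhom hsurj
end
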